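/- Finiteness of zeros away from the real axis (core of Corollary 4.5). For every δ > 0, the set {λ ∈ ℂ : Φ(λ) = 0 and |Im λ| ≥ δ} is finite. -/

import Mathlib

/-!
Write `F z = ∫₀^{2π} e^{izt} K t dt`, so that `Φ = 1 - e^{2πiz} + iF`. At a zero with
`Im z ≥ δ` one has `‖F z‖ ≥ 1 - e^{-2πδ} > 0`. But `F z → 0` as `Im z → ∞` (dominated
convergence), and also as `|Re z| → ∞` with `Im z` confined to a compact set: near `Im z = b`,
`F z` is uniformly close to the Fourier transform of `e^{-bt} K t` at `Re z`, which tends to `0`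
by Riemann–Lebesgue. Hence these zeros lie in a compact set, and there are finitely many of them
because `Φ` is entire and not identically zero. The substitution `t ↦ 2π - t` turns zeros of `Φ`
in the lower half-plane into zeros of another function of the same form in the upper one.
-/

open MeasureTheory Real Complex

/-- `Φ(λ) = 1 − e^{2πiλ} + i ∫₀^{2π} e^{iλt} K(t) dt`. -/
noncomputable def Phi (K : ℝ → ℂ) (lam : ℂ) : ℂ :=
  1 - Complex.exp (2 * Real.pi * Complex.I * lam)
    + Complex.I * ∫ t in (0:ℝ)..(2 * Real.pi), Complex.exp (Complex.I * lam * t) * K t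

open Filter Set Topology
open scoped FourierTransform

noncomputable def fourierLaplace (T : ℝ) (K : ℝ → ℂ) (z : ℂ) : ℂ :=
  ∫ t in Ioc 0 T, cexp (I * z * t) * K t

section fourierLaplace

variable {T : ℝ} {K : ℝ → ℂ}

lemma cexp_I_mul_mul (z : ℂ) (t : ℝ) :
    cexp (I * z * t) = cexp (I * z.re * t) * rexp (-(z.im * t)) := by
  rw [ofReal_exp, ← Complex.exp_add]
  congr 1
  conv_lhs => rw [← re_add_im z]
  push_cast
  linear_combination (z.im * t : ℂ) * I_sq

lemma norm_cexp_I_mul_mul (z : ℂ) (t : ℝ) : ‖cexp (I * z * t)‖ = rexp (-(z.im * t)) := by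
  simp [Complex.norm_exp]

lemma exp_neg_mul_le_exp_abs_mul {y t : ℝ} (ht : t ∈ Ioc 0 T) :
    rexp (-(y * t)) ≤ rexp (|y| * T) := by
  apply exp_le_exp.2
  calc -(y * t) ≤ |y| * t := by nlinarith [neg_abs_le y, ht.1]
    _ ≤ |y| * T := mul_le_mul_of_nonneg_left ht.2 (abs_nonneg y)

lemma integrableOn_Ioc_continuous_mul {g : ℝ → ℂ} (hg : Continuous g)
    (hK : IntegrableOn K (Ioc 0 T)) : IntegrableOn (fun t => g t * K t) (Ioc 0 T) :=
  hK.continuousOn_mul_of_subset hg.continuousOn isCompact_Icc measurableSet_Ioc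
    Ioc_subset_Icc_self

lemma norm_fourierLaplace_le (z : ℂ) :
    ‖fourierLaplace T K z‖ ≤ ∫ t in Ioc 0 T, rexp (-(z.im * t)) * ‖K t‖ := by
  refine (norm_integral_le_integral_norm _).trans_eq ?_
  simp_rw [norm_mul, norm_cexp_I_mul_mul]

lemma differentiable_fourierLaplace (hK : IntegrableOn K (Ioc 0 T)) :
    Differentiable ℂ (fourierLaplace T K) := by
  intro z₀
  refine (hasDerivAt_integral_of_dominated_loc_of_deriv_le (μ := volume.restrict (Ioc 0 T))
    (F := fun z t => cexp (I * z * t) * K t) (F' := fun z t => cexp (I * z * t) * (I * t) * K t)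
    (bound := fun t => rexp ((‖z₀‖ + 1) * T) * T * ‖K t‖) (Metric.ball_mem_nhds z₀ one_pos)
    (Eventually.of_forall fun z =>
      (integrableOn_Ioc_continuous_mul (by fun_prop) hK).aestronglyMeasurable)
    (integrableOn_Ioc_continuous_mul (by fun_prop) hK)
    (integrableOn_Ioc_continuous_mul (by fun_prop) hK).aestronglyMeasurable ?_
    (hK.norm.const_mul _) ?_).2.differentiableAt
  · filter_upwards [ae_restrict_mem measurableSet_Ioc] with t ht z hz
    have hzim : |z.im| ≤ ‖z₀‖ + 1 := by
      rw [mem_ball_iff_norm] at hz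
      linarith [abs_im_le_norm z, norm_le_norm_add_norm_sub' z z₀]
    rw [norm_mul, norm_mul, norm_cexp_I_mul_mul, norm_mul, norm_I, one_mul, norm_real,
      Real.norm_of_nonneg ht.1.le]
    have hexp : rexp (-(z.im * t)) ≤ rexp ((‖z₀‖ + 1) * T) :=
      (exp_neg_mul_le_exp_abs_mul ht).trans
        (exp_le_exp.2 (mul_le_mul_of_nonneg_right hzim (ht.1.trans_le ht.2).le))
    exact mul_le_mul_of_nonneg_right (mul_le_mul hexp ht.2 ht.1.le (exp_pos _).le)
      (norm_nonneg _)
  · refine ae_of_all _ fun t z _ => ?_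
    simpa using (((hasDerivAt_id z).const_mul I).mul_const (t : ℂ)).cexp.mul_const (K t)

lemma tendsto_integral_exp_neg_mul_atTop (hK : IntegrableOn K (Ioc 0 T)) :
    Tendsto (fun y : ℝ => ∫ t in Ioc 0 T, rexp (-(y * t)) * ‖K t‖) atTop (𝓝 0) := by
  have h := tendsto_integral_filter_of_dominated_convergence (l := atTop)
    (μ := volume.restrict (Ioc 0 T)) (F := fun y t => rexp (-(y * t)) * ‖K t‖)
    (f := fun _ => 0) (fun t => ‖K t‖)
    (Eventually.of_forall fun y =>
      (by fun_prop : Continuous fun t => rexp (-(y * t))).aestronglyMeasurable.mul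
        hK.norm.aestronglyMeasurable) ?_ hK.norm ?_
  · simpa using h
  · filter_upwards [eventually_ge_atTop 0] with y hy
    filter_upwards [ae_restrict_mem measurableSet_Ioc] with t ht
    rw [norm_mul, norm_norm, Real.norm_of_nonneg (exp_pos _).le]
    exact mul_le_of_le_one_left (norm_nonneg _) (exp_le_one_iff.2 (by nlinarith [ht.1]))
  · filter_upwards [ae_restrict_mem measurableSet_Ioc] with t ht
    simpa using (tendsto_exp_neg_atTop_nhds_zero.comp
      (tendsto_id.atTop_mul_const ht.1)).mul_const ‖K t‖

lemma tendsto_fourierLaplace_comap_im_atTop (hK : IntegrableOn K (Ioc 0 T)) :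
    Tendsto (fourierLaplace T K) (comap im atTop) (𝓝 0) :=
  squeeze_zero_norm norm_fourierLaplace_le
    ((tendsto_integral_exp_neg_mul_atTop hK).comp tendsto_comap)

lemma tendsto_fourierLaplace_ofReal_cocompact (K : ℝ → ℂ) :
    Tendsto (fun a : ℝ => fourierLaplace T K a) (cocompact ℝ) (𝓝 0) := by
  -- `𝓕` has kernel `e^{-2πivw}`, so the frequency `a` corresponds to `w = -a / (2π)`.
  have hscale : Tendsto (fun a : ℝ => -(2 * π)⁻¹ * a) (cocompact ℝ) (cocompact ℝ) :=
    (Homeomorph.mulLeft₀ _ (by simp [pi_ne_zero])).isClosedEmbedding.tendsto_cocompact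
  refine ((Real.zero_at_infty_fourier ((Ioc 0 T).indicator K)).comp hscale).congr fun a => ?_
  rw [Function.comp_apply, fourierLaplace, fourier_real_eq_integral_exp_smul,
    ← integral_indicator measurableSet_Ioc]
  congr 1 with t
  rw [smul_eq_mul, indicator_mul_right]
  congr 2
  field_simp
  push_cast
  ring

lemma norm_fourierLaplace_sub_le (hK : IntegrableOn K (Ioc 0 T)) (z : ℂ) (b : ℝ) :
    ‖fourierLaplace T K z - fourierLaplace T (fun t => rexp (-(b * t)) * K t) z.re‖
      ≤ ∫ t in Ioc 0 T, |rexp (-(z.im * t)) - rexp (-(b * t))| * ‖K t‖ := by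
  have hint : IntegrableOn (fun t : ℝ => cexp (I * z.re * t) * (rexp (-(b * t)) * K t))
      (Ioc 0 T) := by
    simpa only [mul_assoc] using integrableOn_Ioc_continuous_mul
      (g := fun t => cexp (I * z.re * t) * rexp (-(b * t))) (by fun_prop) hK
  rw [fourierLaplace, fourierLaplace, ← integral_sub (integrableOn_Ioc_continuous_mul
    (by fun_prop) hK) hint]
  refine (norm_integral_le_integral_norm _).trans_eq (congrArg _ (funext fun t => ?_))
  rw [cexp_I_mul_mul z t, show ∀ u v w k : ℂ, u * v * k - u * (w * k) = u * (v - w) * k by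
    intros; ring, norm_mul, norm_mul, ← ofReal_sub, norm_real, Real.norm_eq_abs]
  simp [norm_cexp_I_mul_mul]

lemma tendsto_integral_abs_exp_sub_nhds (hK : IntegrableOn K (Ioc 0 T)) (b : ℝ) :
    Tendsto (fun y => ∫ t in Ioc 0 T, |rexp (-(y * t)) - rexp (-(b * t))| * ‖K t‖)
      (𝓝 b) (𝓝 0) := by
  have hcont := continuousAt_of_dominated (μ := volume.restrict (Ioc 0 T)) (x₀ := b)
    (F := fun y t => |rexp (-(y * t)) - rexp (-(b * t))| * ‖K t‖)
    (bound := fun t => rexp ((|b| + 1) * T) * ‖K t‖)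
    (Eventually.of_forall fun y => (by fun_prop : Continuous fun t =>
      |rexp (-(y * t)) - rexp (-(b * t))|).aestronglyMeasurable.mul
        hK.norm.aestronglyMeasurable) ?_ (hK.norm.const_mul _)
    (ae_of_all _ fun t => by fun_prop)
  · simpa using hcont.tendsto
  · filter_upwards [Metric.ball_mem_nhds b one_pos] with y hy
    filter_upwards [ae_restrict_mem measurableSet_Ioc] with t ht
    have hT : 0 ≤ T := (ht.1.trans_le ht.2).le
    have hy' : |y| ≤ |b| + 1 := by
      rw [Metric.mem_ball, Real.dist_eq] at hy
      linarith [abs_sub_abs_le_abs_sub y b]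
    have h₁ := (exp_neg_mul_le_exp_abs_mul (y := y) ht).trans
      (exp_le_exp.2 (mul_le_mul_of_nonneg_right hy' hT))
    have h₂ := (exp_neg_mul_le_exp_abs_mul (y := b) ht).trans
      (exp_le_exp.2 (mul_le_mul_of_nonneg_right (le_add_of_nonneg_right zero_le_one) hT))
    rw [norm_mul, norm_norm, Real.norm_eq_abs, abs_abs]
    refine mul_le_mul_of_nonneg_right (abs_sub_le_iff.2 ⟨?_, ?_⟩) (norm_nonneg _) <;>
      linarith [exp_pos (-(y * t)), exp_pos (-(b * t))]

lemma tendsto_fourierLaplace_comap_re_cocompact_inf_nhds (hK : IntegrableOn K (Ioc 0 T))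
    (b : ℝ) : Tendsto (fourierLaplace T K) (comap re (cocompact ℝ) ⊓ comap im (𝓝 b)) (𝓝 0) := by
  have hmain : Tendsto (fun z : ℂ => fourierLaplace T (fun t => rexp (-(b * t)) * K t) z.re)
      (comap re (cocompact ℝ) ⊓ comap im (𝓝 b)) (𝓝 0) :=
    (tendsto_fourierLaplace_ofReal_cocompact _).comp (tendsto_comap.mono_left inf_le_left)
  have herr := squeeze_zero_norm (norm_fourierLaplace_sub_le hK · b)
    ((tendsto_integral_abs_exp_sub_nhds hK b).comp (tendsto_comap.mono_left
      (inf_le_right : comap re (cocompact ℝ) ⊓ comap im (𝓝 b) ≤ _)))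
  simpa using hmain.add herr

lemma tendsto_fourierLaplace_comap_re_cocompact_inf_principal (hK : IntegrableOn K (Ioc 0 T))
    {s : Set ℝ} (hs : IsCompact s) :
    Tendsto (fourierLaplace T K) (comap re (cocompact ℝ) ⊓ 𝓟 (im ⁻¹' s)) (𝓝 0) := by
  refine (tendsto_iff_ultrafilter _ _ _).2 fun u hu => ?_
  obtain ⟨b, -, hb⟩ := hs.ultrafilter_le_nhds (u.map im) <| by
    rw [Ultrafilter.coe_map, map_le_iff_le_comap, comap_principal]
    exact hu.trans inf_le_right
  rw [Ultrafilter.coe_map, map_le_iff_le_comap] at hb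
  exact (tendsto_fourierLaplace_comap_re_cocompact_inf_nhds hK b).mono_left
    (le_inf (hu.trans inf_le_left) hb)

lemma isBounded_setOf_le_im_le_norm_fourierLaplace (hK : IntegrableOn K (Ioc 0 T)) (δ : ℝ)
    {c : ℝ} (hc : 0 < c) : Bornology.IsBounded {z | δ ≤ z.im ∧ c ≤ ‖fourierLaplace T K z‖} := by
  have hsmall {l : Filter ℂ} (h : Tendsto (fourierLaplace T K) l (𝓝 0)) :
      ∀ᶠ z in l, ‖fourierLaplace T K z‖ < c :=
    (tendsto_zero_iff_norm_tendsto_zero.1 h).eventually_lt_const hc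
  obtain ⟨M, hM⟩ : ∃ M, ∀ z : ℂ, M ≤ z.im → ‖fourierLaplace T K z‖ < c := by
    obtain ⟨M, hM⟩ := eventually_atTop.1
      (eventually_comap.1 (hsmall (tendsto_fourierLaplace_comap_im_atTop hK)))
    exact ⟨M, fun z hz => hM z.im hz z rfl⟩
  obtain ⟨C, hC, hCc⟩ : ∃ C, IsCompact C ∧
      ∀ z : ℂ, z.re ∉ C → z.im ∈ Icc δ M → ‖fourierLaplace T K z‖ < c := by
    obtain ⟨C, hC, hCc⟩ := hasBasis_cocompact.eventually_iff.1 (eventually_comap.1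
      (eventually_inf_principal.1 (hsmall
        (tendsto_fourierLaplace_comap_re_cocompact_inf_principal hK isCompact_Icc))))
    exact ⟨C, hC, fun z hz hzs => hCc hz z rfl hzs⟩
  refine (hC.reProdIm (isCompact_Icc (a := δ) (b := M))).isBounded.subset fun z ⟨hδz, hcz⟩ => ?_
  have hzM : z.im ≤ M := not_lt.1 fun h => hcz.not_gt (hM z h.le)
  exact ⟨by_contra fun hzC => hcz.not_gt (hCc z hzC ⟨hδz, hzM⟩), hδz, hzM⟩

end fourierLaplace

lemma IsCompact.inter_preimage_zero_finite {𝕜 E : Type*} [NontriviallyNormedField 𝕜]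
    [ConnectedSpace 𝕜] [NormedAddCommGroup E] [NormedSpace 𝕜 E] {f : 𝕜 → E} {S : Set 𝕜}
    (hS : IsCompact S) (hf : AnalyticOnNhd 𝕜 f univ) {z₀ : 𝕜} (hz₀ : f z₀ ≠ 0) :
    (S ∩ f ⁻¹' {0}).Finite := by
  have h := hf.preimage_zero_mem_codiscrete hz₀
  rw [preimage_compl, compl_mem_codiscrete_iff] at h
  exact (hS.inter_right h.1).finite (h.2.mono inter_subset_right)

section Phi

variable {K : ℝ → ℂ}

lemma Phi_eq_fourierLaplace (K : ℝ → ℂ) (z : ℂ) :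
    Phi K z = 1 - cexp (2 * π * I * z) + I * fourierLaplace (2 * π) K z := by
  rw [Phi, intervalIntegral.integral_of_le two_pi_pos.le, fourierLaplace]

lemma differentiable_Phi (hK : IntegrableOn K (Ioc 0 (2 * π))) : Differentiable ℂ (Phi K) := by
  have hF := differentiable_fourierLaplace hK
  rw [funext (Phi_eq_fourierLaplace K)]
  fun_prop

lemma one_sub_exp_le_norm_fourierLaplace_of_Phi_eq_zero {z : ℂ} (hz : Phi K z = 0) :
    1 - rexp (-(2 * π * z.im)) ≤ ‖fourierLaplace (2 * π) K z‖ := by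
  rw [Phi_eq_fourierLaplace] at hz
  have h := norm_sub_le (cexp (2 * π * I * z)) (I * fourierLaplace (2 * π) K z)
  have hre : (2 * π * I * z).re = -(2 * π * z.im) := by simp
  rw [show cexp (2 * π * I * z) - I * fourierLaplace (2 * π) K z = 1 by linear_combination -hz,
    norm_one, norm_mul, norm_I, one_mul, Complex.norm_exp, hre] at h
  linarith

lemma Phi_reflect (K : ℝ → ℂ) (z : ℂ) :
    Phi (fun t => -K (2 * π - t)) (-z) = -cexp (-(2 * π * I * z)) * Phi K z := by
  have hcv := intervalIntegral.integral_comp_sub_left (a := 0) (b := 2 * π)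
    (fun s => cexp (I * (-z) * ((2 * π - s : ℝ) : ℂ)) * (-K s)) (2 * π)
  simp only [sub_sub_cancel, sub_zero, sub_self] at hcv
  have hint : (∫ s in (0:ℝ)..2 * π, cexp (I * (-z) * ((2 * π - s : ℝ) : ℂ)) * (-K s))
      = -(cexp (-(2 * π * I * z)) * ∫ s in (0:ℝ)..2 * π, cexp (I * z * s) * K s) := by
    rw [← intervalIntegral.integral_const_mul, ← intervalIntegral.integral_neg]
    refine intervalIntegral.integral_congr fun s _ => ?_
    simp only [show I * (-z) * ((2 * π - s : ℝ) : ℂ) = -(2 * π * I * z) + I * z * s by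
      push_cast; ring, Complex.exp_add]
    ring
  have hexp : cexp (-(2 * π * I * z)) * cexp (2 * π * I * z) = 1 := by
    rw [← Complex.exp_add, neg_add_cancel, Complex.exp_zero]
  simp only [Phi]
  rw [hcv, hint, show 2 * π * I * -z = -(2 * π * I * z) by ring]
  linear_combination -hexp

lemma finite_Phi_zeros_le_im (hK : IntegrableOn K (Ioc 0 (2 * π))) {δ : ℝ} (hδ : 0 < δ) :
    {z : ℂ | Phi K z = 0 ∧ δ ≤ z.im}.Finite := by
  set c := 1 - rexp (-(2 * π * δ))
  have hc : 0 < c := sub_pos.2 (Real.exp_lt_one_iff.2 (by nlinarith [pi_pos]))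
  have hzeros : {z : ℂ | Phi K z = 0 ∧ δ ≤ z.im}
      ⊆ {z | δ ≤ z.im ∧ c ≤ ‖fourierLaplace (2 * π) K z‖} := fun z ⟨hz, hδz⟩ =>
    ⟨hδz, (sub_le_sub_left (exp_le_exp.2 (by nlinarith [pi_pos])) 1).trans
      (one_sub_exp_le_norm_fourierLaplace_of_Phi_eq_zero hz)⟩
  have hB := isBounded_setOf_le_im_le_norm_fourierLaplace hK δ hc
  obtain ⟨R, hR⟩ := hB.subset_closedBall 0
  have hne : Phi K ((max R δ + 1 : ℝ) * I) ≠ 0 := fun h => by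
    have hmem := hR (hzeros ⟨h, by rw [mul_I_im, ofReal_re]; linarith [le_max_right R δ]⟩)
    rw [Metric.mem_closedBall, dist_zero_right, norm_mul, norm_I, mul_one, norm_real,
      Real.norm_eq_abs, abs_le] at hmem
    linarith [le_max_left R δ, hmem.2]
  exact (hB.isCompact_closure.inter_preimage_zero_finite
    (analyticOnNhd_univ_iff_differentiable.2 (differentiable_Phi hK)) hne).subset
    fun z hz => ⟨subset_closure (hzeros hz), hz.1⟩

lemma finite_Phi_zeros_im_le_neg (hK : IntegrableOn K (Ioc 0 (2 * π))) {δ : ℝ} (hδ : 0 < δ) :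
    {z : ℂ | Phi K z = 0 ∧ z.im ≤ -δ}.Finite := by
  have hK' : IntegrableOn (fun t => -K (2 * π - t)) (Ioc 0 (2 * π)) := by
    have h := ((intervalIntegrable_iff_integrableOn_Ioc_of_le two_pi_pos.le).2 hK).comp_sub_left
      (2 * π)
    rw [sub_zero, sub_self] at h
    exact (intervalIntegrable_iff_integrableOn_Ioc_of_le two_pi_pos.le).1 h.symm.neg
  refine ((finite_Phi_zeros_le_im hK' hδ).preimage neg_injective.injOn).subset
    fun z ⟨hz, hzδ⟩ => ⟨?_, ?_⟩
  · rw [Phi_reflect, hz, mul_zero]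
  · simp only [neg_im]
    linarith

end Phi

/-- Finiteness of zeros away from the real axis (core of Corollary 4.5): for every
`δ > 0` the set of zeros `λ` of `Φ` with `|Im λ| ≥ δ` is finite. -/
theorem finitely_many_zeros_away_from_real_axis
    (K : ℝ → ℂ)
    (hK : MeasureTheory.MemLp K 2 (MeasureTheory.volume.restrict (Set.Ioo 0 (2 * Real.pi))))
    (δ : ℝ) (hδ : 0 < δ) :
    {lam : ℂ | Phi K lam = 0 ∧ δ ≤ |lam.im|}.Finite := by
  have : IsFiniteMeasure (volume.restrict (Ioo 0 (2 * π))) :=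
    isFiniteMeasure_restrict.2 measure_Ioo_lt_top.ne
  have hKint : IntegrableOn K (Ioc 0 (2 * π)) :=
    (integrableOn_Ioc_iff_integrableOn_Ioo ..).2 (hK.integrable one_le_two)
  refine ((finite_Phi_zeros_le_im hKint hδ).union (finite_Phi_zeros_im_le_neg hKint hδ)).subset ?_
  rintro z ⟨hz, hδz⟩
  exact (le_abs.1 hδz).imp (⟨hz, ·⟩) fun h => ⟨hz, by linarith⟩
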